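/- Weak-type bound for the fractional maximal operator: Let 0 ≤ α < n, p ≥ 1 with p < n/α (any p ≥ 1 when α = 0 with q = p), and define q by 1/q = 1/p − α/n. Then there is a constant c = c(n,α,p) such that for every weight w ∈ A_{p,q} (interpreted as the A_{1,q} condition when p = 1) and every measurable f, ‖M_α f‖_{L^{q,∞}(w^q)} ≤ c [w]_{A_{p,q}}^{1/q} ‖w·f‖_{L^{p}(ℝⁿ)}. -/

import Mathlib

open MeasureTheory ENNReal Set

noncomputable section

/-- Euclidean space `ℝⁿ`. -/
abbrev Euc (n : ℕ) := EuclideanSpace ℝ (Fin n)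

variable {n : ℕ}

/-- The axis-parallel closed cube with lower corner `a` and side length `h`. -/
def Cube (a : Euc n) (h : ℝ) : Set (Euc n) :=
  {x | ∀ i, a i ≤ x i ∧ x i ≤ a i + h}

/-- The weighted measure `u(E) = ∫_E u dx` of a set. -/
def wMeas (u : Euc n → ℝ) (E : Set (Euc n)) : ℝ≥0∞ :=
  ∫⁻ x in E, ENNReal.ofReal (u x)

/-- The dual exponent `p' = p/(p-1)`. -/
def dualExp (p : ℝ) : ℝ := p / (p - 1)

/-- The `A_{p,q}` constant of a weight `w` (with the `A_{1,q}` convention when `p = 1`). -/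
def Apq (p q : ℝ) (w : Euc n → ℝ) : ℝ≥0∞ :=
  ⨆ (a : Euc n) (h : ℝ) (_ : 0 < h),
    ((volume (Cube a h))⁻¹ * ∫⁻ x in Cube a h, ENNReal.ofReal (w x) ^ q) *
      (if p = 1 then
        (essSup (fun x => (ENNReal.ofReal (w x))⁻¹) (volume.restrict (Cube a h))) ^ q
      else
        ((volume (Cube a h))⁻¹ * ∫⁻ x in Cube a h,
            ENNReal.ofReal (w x) ^ (-(dualExp p))) ^ (q / dualExp p))

/-- The weighted Lebesgue norm `‖w f‖_{L^p(ℝⁿ)}`. -/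
def wLp (w f : Euc n → ℝ) (p : ℝ) : ℝ≥0∞ :=
  (∫⁻ x, (ENNReal.ofReal (w x) * ENNReal.ofReal |f x|) ^ p) ^ (1 / p)

/-- The weighted Lebesgue norm `‖w g‖_{L^q(ℝⁿ)}` of an `ℝ≥0∞`-valued function. -/
def wLpE (w : Euc n → ℝ) (g : Euc n → ℝ≥0∞) (q : ℝ) : ℝ≥0∞ :=
  (∫⁻ x, (ENNReal.ofReal (w x) * g x) ^ q) ^ (1 / q)

/-- The weak norm `‖g‖_{L^{q,∞}(u)} = sup_{λ>0} λ u({|g|>λ})^{1/q}`. -/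
def weakLp (u : Euc n → ℝ) (g : Euc n → ℝ) (q : ℝ) : ℝ≥0∞ :=
  ⨆ (t : ℝ) (_ : 0 < t), ENNReal.ofReal t * wMeas u {x | t < |g x|} ^ (1 / q)

/-- The weak norm of an `ℝ≥0∞`-valued function. -/
def weakLpE (u : Euc n → ℝ) (g : Euc n → ℝ≥0∞) (q : ℝ) : ℝ≥0∞ :=
  ⨆ (t : ℝ) (_ : 0 < t), ENNReal.ofReal t * wMeas u {x | ENNReal.ofReal t < g x} ^ (1 / q)

/-- The fractional integral (Riesz potential) `I_α f(x) = ∫ |f(y)| |x-y|^{α-n} dy`. -/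
def riesz (α : ℝ) (f : Euc n → ℝ) (x : Euc n) : ℝ≥0∞ :=
  ∫⁻ y, ENNReal.ofReal |f y| * ENNReal.ofReal (‖x - y‖ ^ (α - (n : ℝ)))

/-- The fractional maximal operator `M_α f(x) = sup_{Q ∋ x} |Q|^{α/n-1} ∫_Q |f|`. -/
def fracMax (α : ℝ) (f : Euc n → ℝ) (x : Euc n) : ℝ≥0∞ :=
  ⨆ (a : Euc n) (h : ℝ) (_ : 0 < h) (_ : x ∈ Cube a h),
    volume (Cube a h) ^ (α / (n : ℝ) - 1) * ∫⁻ y in Cube a h, ENNReal.ofReal |f y|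

/-!
Fix a level `t`. Each point where `M_α f > t` lies in a cube `Q` with
`t < |Q|^{α/n-1} ∫_Q |f|`; once the side lengths are bounded, Vitali's lemma selects disjoint
such cubes whose enlargements `Q*` by the factor `8√n` cover the level set. Hölder's inequality
with `w` and `w⁻¹` on `Q` and the `A_{p,q}` condition on `Q*` give
`t^q w^q(Q*) ≤ (8√n)^{n(1+q/p')} [w]_{A_{p,q}} (∫_Q |w f|^p)^{q/p}`, the powers of `|Q|`
cancelling because `1/q = 1/p - α/n`; since `q/p ≥ 1`, summing over the disjoint cubes gives the
bound. Finiteness of `[w]_{A_{p,q}}` forces `w > 0` a.e. on every cube charged by `w^q`, which is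
all Hölder's inequality needs there.
-/

open Metric

lemma cube_eq_preimage (a : Euc n) (h : ℝ) :
    Cube a h = (MeasurableEquiv.toLp 2 (Fin n → ℝ)).symm ⁻¹'
      univ.pi fun i => Icc (a i) (a i + h) := by
  ext x; simp [Cube, Icc]

lemma measurableSet_cube (a : Euc n) (h : ℝ) : MeasurableSet (Cube a h) := by
  rw [cube_eq_preimage]
  exact (MeasurableEquiv.toLp 2 (Fin n → ℝ)).symm.measurable
    (MeasurableSet.univ_pi fun _ => measurableSet_Icc)

lemma volume_cube (a : Euc n) (h : ℝ) : volume (Cube a h) = ENNReal.ofReal h ^ n := by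
  rw [cube_eq_preimage,
    (EuclideanSpace.volume_preserving_symm_measurableEquiv_toLp (Fin n)).measure_preimage
      (MeasurableSet.univ_pi fun _ => measurableSet_Icc).nullMeasurableSet,
    volume_pi, Measure.pi_pi]
  simp [Real.volume_Icc]

lemma cube_subset_closedBall {a x : Euc n} {h : ℝ} (hh : 0 ≤ h) (hx : x ∈ Cube a h) :
    Cube a h ⊆ closedBall x (h * √n) := by
  intro y hy
  have hcoord (i : Fin n) : dist (y i) (x i) ^ 2 ≤ h ^ 2 := by
    have : |y i - x i| ≤ h :=
      abs_sub_le_iff.2 ⟨by linarith [(hy i).2, (hx i).1], by linarith [(hx i).2, (hy i).1]⟩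
    rw [Real.dist_eq]
    exact pow_le_pow_left₀ (abs_nonneg _) this 2
  calc dist y x = √(∑ i, dist (y i) (x i) ^ 2) := EuclideanSpace.dist_eq y x
    _ ≤ √(∑ _i : Fin n, h ^ 2) := Real.sqrt_le_sqrt (Finset.sum_le_sum fun i _ => hcoord i)
    _ = h * √n := by
      rw [Finset.sum_const, Finset.card_univ, Fintype.card_fin, nsmul_eq_mul,
        Real.sqrt_mul' _ (sq_nonneg h), Real.sqrt_sq hh, mul_comm]

lemma closedBall_subset_cube (x : Euc n) (ρ : ℝ) :
    closedBall x ρ ⊆ Cube (WithLp.toLp 2 fun i => x i - ρ) (2 * ρ) := by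
  intro y hy i
  have hi := abs_sub_le_iff.1 ((PiLp.dist_apply_le y x i).trans (mem_closedBall.1 hy))
  constructor <;> dsimp only <;> linarith [hi.1, hi.2]

namespace ENNReal

lemma sum_rpow_le_rpow_sum {ι : Type*} (s : Finset ι) (g : ι → ℝ≥0∞) {r : ℝ} (hr : 1 ≤ r) :
    ∑ i ∈ s, g i ^ r ≤ (∑ i ∈ s, g i) ^ r := by
  classical
  induction s using Finset.induction_on with
  | empty => simp [zero_rpow_of_pos (zero_lt_one.trans_le hr)]
  | insert i s hi ih =>
    rw [Finset.sum_insert hi, Finset.sum_insert hi]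
    exact (add_le_add_right ih _).trans (add_rpow_le_rpow_add _ _ hr)

lemma tsum_rpow_le_rpow_tsum {ι : Type*} (g : ι → ℝ≥0∞) {r : ℝ} (hr : 1 ≤ r) :
    ∑' i, g i ^ r ≤ (∑' i, g i) ^ r := by
  rw [ENNReal.tsum_eq_iSup_sum]
  exact iSup_le fun s => (sum_rpow_le_rpow_sum s g hr).trans
    (rpow_le_rpow (ENNReal.sum_le_tsum s) (zero_le_one.trans hr))

end ENNReal

lemma volume_cube_ne_zero (a : Euc n) {h : ℝ} (hh : 0 < h) : volume (Cube a h) ≠ 0 := by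
  rw [volume_cube]
  exact pow_ne_zero _ (ENNReal.ofReal_pos.2 hh).ne'

lemma volume_cube_ne_top (a : Euc n) (h : ℝ) : volume (Cube a h) ≠ ⊤ := by
  rw [volume_cube]
  exact pow_ne_top ofReal_ne_top

def fracAvg (α : ℝ) (f : Euc n → ℝ) (a : Euc n) (h : ℝ) : ℝ≥0∞ :=
  volume (Cube a h) ^ (α / (n : ℝ) - 1) * ∫⁻ y in Cube a h, ENNReal.ofReal |f y|

lemma setOf_lt_fracMax_eq_iUnion (α : ℝ) (f : Euc n → ℝ) (t : ℝ≥0∞) :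
    {x | t < fracMax α f x} =
      ⋃ k : ℕ, {x | ∃ (a : Euc n) (h : ℝ), 0 < h ∧ h < k ∧ x ∈ Cube a h ∧ t < fracAvg α f a h} := by
  ext x
  simp only [fracMax, fracAvg, mem_ofPred_eq, mem_iUnion, lt_iSup_iff, exists_prop]
  constructor
  · rintro ⟨a, h, hh, hx, ht⟩
    obtain ⟨k, hk⟩ := exists_nat_gt h
    exact ⟨k, a, h, hh, hk, hx, ht⟩
  · rintro ⟨-, a, h, hh, -, hx, ht⟩
    exact ⟨a, h, hh, hx, ht⟩

lemma weakLpE_le_of_forall_rpow_mul_le {u : Euc n → ℝ} {g : Euc n → ℝ≥0∞} {q : ℝ}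
    {B : ℝ≥0∞} (hq : 0 < q) (hB : ∀ t : ℝ≥0∞, t ^ q * wMeas u {x | t < g x} ≤ B) :
    weakLpE u g q ≤ B ^ (1 / q) := by
  refine iSup₂_le fun t _ => ?_
  calc ENNReal.ofReal t * wMeas u {x | ENNReal.ofReal t < g x} ^ (1 / q)
      = (ENNReal.ofReal t ^ q * wMeas u {x | ENNReal.ofReal t < g x}) ^ (1 / q) := by
        rw [mul_rpow_of_nonneg _ _ (by positivity), ← rpow_mul, mul_one_div_cancel hq.ne',
          rpow_one]
    _ ≤ B ^ (1 / q) := rpow_le_rpow (hB _) (by positivity)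

lemma wMeas_rpow_eq_withDensity {w : Euc n → ℝ} (hw : ∀ x, 0 ≤ w x) {q : ℝ} (hq : 0 ≤ q)
    (E : Set (Euc n)) :
    wMeas (fun x => w x ^ q) E = volume.withDensity (fun x => ENNReal.ofReal (w x) ^ q) E := by
  rw [withDensity_apply', wMeas]
  simp_rw [ENNReal.ofReal_rpow_of_nonneg (hw _) hq]

lemma dualExp_nonneg {p : ℝ} (hp : 1 ≤ p) : 0 ≤ dualExp p :=
  div_nonneg (by linarith) (by linarith)

lemma dualExp_pos {p : ℝ} (hp : 1 < p) : 0 < dualExp p :=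
  div_pos (by linarith) (by linarith)

/-- The scaling identity that makes the estimate on a cube independent of its size. -/
lemma exponents_cancel {α p q : ℝ} (hp : 1 ≤ p) (hq : q ≠ 0) (hqe : 1 / q = 1 / p - α / n) :
    q * (α / n - 1) + (1 + q / dualExp p) = 0 := by
  have hdual : q / dualExp p = q * (p - 1) / p := by
    rcases hp.eq_or_lt with rfl | hp1
    · simp [dualExp]
    · rw [dualExp, div_div_eq_mul_div, mul_comm]
  rw [hdual, show α / n = 1 / p - 1 / q by linarith]
  field_simp
  ring

/-- `‖w⁻¹‖_{L^{p'}(Q)}`, read as `ess sup_Q w⁻¹` when `p = 1` as in `Apq`. -/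
def invWeightNorm (p : ℝ) (w : Euc n → ℝ) (Q : Set (Euc n)) : ℝ≥0∞ :=
  if p = 1 then essSup (fun x => (ENNReal.ofReal (w x))⁻¹) (volume.restrict Q)
  else (∫⁻ x in Q, ENNReal.ofReal (w x) ^ (-dualExp p)) ^ (1 / dualExp p)

section Weight

variable {p q : ℝ} {w : Euc n → ℝ}

lemma invWeightNorm_mono (hp : 1 ≤ p) {Q Q' : Set (Euc n)} (hQ : Q ⊆ Q') :
    invWeightNorm p w Q ≤ invWeightNorm p w Q' := by
  unfold invWeightNorm
  split_ifs with hp1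
  · exact essSup_mono_measure
      (Measure.absolutelyContinuous_of_le (Measure.restrict_mono hQ le_rfl))
  · exact rpow_le_rpow (lintegral_mono_set hQ)
      (one_div_nonneg.2 (dualExp_nonneg hp))

lemma lintegral_le_mul_invWeightNorm (hp : 1 ≤ p) (hw : Measurable w) {f : Euc n → ℝ}
    (hf : Measurable f) {Q : Set (Euc n)} (hpos : ∀ᵐ x ∂volume.restrict Q, 0 < w x) :
    ∫⁻ y in Q, ENNReal.ofReal |f y| ≤
      (∫⁻ y in Q, (ENNReal.ofReal (w y) * ENNReal.ofReal |f y|) ^ p) ^ (1 / p) *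
        invWeightNorm p w Q := by
  set F := fun y => ENNReal.ofReal (w y) * ENNReal.ofReal |f y|
  have hF : AEMeasurable F (volume.restrict Q) :=
    (hw.ennreal_ofReal.mul hf.abs.ennreal_ofReal).aemeasurable
  have hfactor : (fun y => ENNReal.ofReal |f y|) =ᵐ[volume.restrict Q]
      fun y => F y * (ENNReal.ofReal (w y))⁻¹ := by
    filter_upwards [hpos] with y hy
    rw [mul_comm, ← mul_assoc, ENNReal.inv_mul_cancel (ofReal_pos.2 hy).ne' ofReal_ne_top,
      one_mul]
  rw [lintegral_congr_ae hfactor, invWeightNorm]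
  split_ifs with hp1
  · subst hp1
    set S := essSup (fun x => (ENNReal.ofReal (w x))⁻¹) (volume.restrict Q)
    calc ∫⁻ y in Q, F y * (ENNReal.ofReal (w y))⁻¹ ≤ ∫⁻ y in Q, F y * S :=
          lintegral_mono_ae <| by
            filter_upwards [ae_le_essSup fun x => (ENNReal.ofReal (w x))⁻¹] with y hy
            exact mul_le_mul_right hy _
      _ = (∫⁻ y in Q, F y ^ (1 : ℝ)) ^ (1 / (1 : ℝ)) * S := by
          simp only [rpow_one, div_one]
          exact lintegral_mul_const'' S hF
  · have hc : p.HolderConjugate (dualExp p) :=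
      Real.HolderConjugate.conjExponent (lt_of_le_of_ne hp (Ne.symm hp1))
    simpa [ENNReal.inv_rpow, ENNReal.rpow_neg] using
      ENNReal.lintegral_mul_le_Lp_mul_Lq _ hc hF hw.ennreal_ofReal.inv.aemeasurable

lemma invWeightNorm_rpow_mul_le_Apq (hp : 1 ≤ p) (hq : 0 ≤ q) (a : Euc n) {h : ℝ}
    (hh : 0 < h) :
    invWeightNorm p w (Cube a h) ^ q * ∫⁻ x in Cube a h, ENNReal.ofReal (w x) ^ q ≤
      Apq p q w * volume (Cube a h) ^ (1 + q / dualExp p) := by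
  set V := volume (Cube a h)
  set W := ∫⁻ x in Cube a h, ENNReal.ofReal (w x) ^ q
  have hV0 := volume_cube_ne_zero a hh
  have hV := volume_cube_ne_top a h
  have hA : V⁻¹ * W * (if p = 1 then
        (essSup (fun x => (ENNReal.ofReal (w x))⁻¹) (volume.restrict (Cube a h))) ^ q
      else (V⁻¹ * ∫⁻ x in Cube a h, ENNReal.ofReal (w x) ^ (-(dualExp p))) ^ (q / dualExp p))
      ≤ Apq p q w :=
    le_iSup_of_le a (le_iSup_of_le h (le_iSup_of_le hh le_rfl))
  unfold invWeightNorm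
  split_ifs at hA ⊢ with hp1
  · subst hp1
    set S := essSup (fun x => (ENNReal.ofReal (w x))⁻¹) (volume.restrict (Cube a h))
    calc S ^ q * W = V⁻¹ * W * S ^ q * V := by
          rw [show V⁻¹ * W * S ^ q * V = S ^ q * W * (V⁻¹ * V) by ring,
            ENNReal.inv_mul_cancel hV0 hV, mul_one]
      _ ≤ Apq 1 q w * V ^ (1 + q / dualExp 1) := by
          simpa [dualExp] using mul_le_mul_left hA V
  · set σ := ∫⁻ x in Cube a h, ENNReal.ofReal (w x) ^ (-dualExp p)
    set e := q / dualExp p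
    have he : 0 ≤ e := div_nonneg hq (dualExp_nonneg hp)
    calc (σ ^ (1 / dualExp p)) ^ q * W
        = V⁻¹ * W * (V⁻¹ * σ) ^ e * (V * V ^ e) := by
          rw [← rpow_mul, mul_rpow_of_nonneg _ _ he,
            show V⁻¹ * W * (V⁻¹ ^ e * σ ^ e) * (V * V ^ e)
              = σ ^ e * W * (V⁻¹ * V) * (V⁻¹ * V) ^ e by rw [mul_rpow_of_nonneg _ _ he]; ring,
            ENNReal.inv_mul_cancel hV0 hV, one_rpow, mul_one, mul_one, one_div_mul_eq_div]
      _ ≤ Apq p q w * V ^ (1 + e) := by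
          rw [rpow_add _ _ hV0 hV, rpow_one]
          exact mul_le_mul_left hA _

lemma invWeightNorm_ne_top (hp : 1 ≤ p) (hq : 0 < q) (hA : Apq p q w ≠ ⊤) (a : Euc n)
    {h : ℝ} (hh : 0 < h) (hW : ∫⁻ x in Cube a h, ENNReal.ofReal (w x) ^ q ≠ 0) :
    invWeightNorm p w (Cube a h) ≠ ⊤ := by
  have hfin := ne_top_of_le_ne_top
    (mul_ne_top hA (rpow_ne_top_of_nonneg (by linarith [div_nonneg hq.le (dualExp_nonneg hp)])
      (volume_cube_ne_top a h)))
    (invWeightNorm_rpow_mul_le_Apq hp hq.le a hh)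
  intro htop
  rw [htop, top_rpow_of_pos hq, top_mul hW] at hfin
  exact hfin rfl

lemma ae_pos_of_invWeightNorm_ne_top (hp : 1 ≤ p) (hw : Measurable w) {Q : Set (Euc n)}
    (hfin : invWeightNorm p w Q ≠ ⊤) : ∀ᵐ x ∂volume.restrict Q, 0 < w x := by
  unfold invWeightNorm at hfin
  split_ifs at hfin with hp1
  · filter_upwards [ae_le_essSup fun x => (ENNReal.ofReal (w x))⁻¹] with x hx
    simpa using ne_top_of_le_ne_top hfin hx
  · have hd := dualExp_pos (lt_of_le_of_ne hp (Ne.symm hp1))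
    have hσ : ∫⁻ x in Q, ENNReal.ofReal (w x) ^ (-dualExp p) ≠ ⊤ := by
      intro hσ
      rw [hσ, top_rpow_of_pos (one_div_pos.2 hd)] at hfin
      exact hfin rfl
    filter_upwards [ae_lt_top (hw.ennreal_ofReal.pow_const _) hσ] with x hx
    by_contra! hx0
    rw [ofReal_eq_zero.2 hx0, zero_rpow_of_neg (neg_neg_of_pos hd)] at hx
    exact lt_irrefl _ hx

end Weight

section Covering

variable {α p q : ℝ} {w f : Euc n → ℝ}

lemma rpow_mul_lintegral_le_of_le_fracAvg (hp : 1 ≤ p) (hq : 0 < q)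
    (hqe : 1 / q = 1 / p - α / n) (hw : Measurable w) (hf : Measurable f)
    (hA : Apq p q w ≠ ⊤) {t : ℝ≥0∞} {a a' : Euc n} {h K : ℝ} (hh : 0 < h) (hK : 0 < K)
    (hsub : Cube a h ⊆ Cube a' (K * h)) (ht : t ≤ fracAvg α f a h) :
    t ^ q * ∫⁻ x in Cube a' (K * h), ENNReal.ofReal (w x) ^ q ≤
      (ENNReal.ofReal K ^ n) ^ (1 + q / dualExp p) * Apq p q w *
        (∫⁻ y in Cube a h, (ENNReal.ofReal (w y) * ENNReal.ofReal |f y|) ^ p) ^ (q / p) := by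
  have hvol : volume (Cube a' (K * h)) = ENNReal.ofReal K ^ n * volume (Cube a h) := by
    rw [volume_cube, volume_cube, ENNReal.ofReal_mul hK.le, mul_pow]
  set V := volume (Cube a h)
  set W := ∫⁻ x in Cube a' (K * h), ENNReal.ofReal (w x) ^ q
  set A := ∫⁻ y in Cube a h, (ENNReal.ofReal (w y) * ENNReal.ofReal |f y|) ^ p
  set S := invWeightNorm p w (Cube a' (K * h))
  set e := q / dualExp p
  have hKh : 0 < K * h := mul_pos hK hh
  rcases eq_or_ne W 0 with hW | hW
  · simp [hW]
  have hpos : ∀ᵐ x ∂volume.restrict (Cube a h), 0 < w x :=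
    ae_restrict_of_ae_restrict_of_subset hsub
      (ae_pos_of_invWeightNorm_ne_top hp hw (invWeightNorm_ne_top hp hq hA a' hKh hW))
  have hholder : t ≤ V ^ (α / n - 1) * (A ^ (1 / p) * S) :=
    ht.trans (mul_le_mul_right ((lintegral_le_mul_invWeightNorm hp hw hf hpos).trans
      (mul_le_mul_right (invWeightNorm_mono hp hsub) _)) _)
  have hpow : t ^ q ≤ V ^ (q * (α / n - 1)) * A ^ (q / p) * S ^ q := by
    calc t ^ q ≤ (V ^ (α / n - 1) * (A ^ (1 / p) * S)) ^ q := rpow_le_rpow hholder hq.le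
      _ = _ := by
        rw [mul_rpow_of_nonneg _ _ hq.le, mul_rpow_of_nonneg _ _ hq.le, ← rpow_mul, ← rpow_mul,
          mul_comm (α / n - 1), one_div_mul_eq_div, mul_assoc]
  have he : 0 ≤ 1 + e := by linarith [div_nonneg hq.le (dualExp_nonneg hp)]
  calc t ^ q * W ≤ V ^ (q * (α / n - 1)) * A ^ (q / p) * (S ^ q * W) := by
        rw [← mul_assoc]; exact mul_le_mul_left hpow W
    _ ≤ V ^ (q * (α / n - 1)) * A ^ (q / p) *
          (Apq p q w * volume (Cube a' (K * h)) ^ (1 + e)) :=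
        mul_le_mul_right (invWeightNorm_rpow_mul_le_Apq hp hq.le a' hKh) _
    _ = (ENNReal.ofReal K ^ n) ^ (1 + e) * Apq p q w * A ^ (q / p) *
          (V ^ (q * (α / n - 1)) * V ^ (1 + e)) := by
        rw [hvol, mul_rpow_of_nonneg _ _ he]; ring
    _ = (ENNReal.ofReal K ^ n) ^ (1 + e) * Apq p q w * A ^ (q / p) := by
        rw [← rpow_add _ _ (volume_cube_ne_zero a hh) (volume_cube_ne_top a h),
          exponents_cancel hp hq.ne' hqe, rpow_zero, mul_one]

/-- A cube of side `h` through `x` lies in `B(x, √n h)`; Vitali's lemma enlarges these balls by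
the factor `4`, and `B(y, 4√n h)` lies in the cube of side `8√n h` centred at `y`. -/
lemma exists_disjoint_subfamily_covering_enlargement_cube (hn : 0 < n) {E : Set (Euc n)}
    (a : Euc n → Euc n) (h : Euc n → ℝ) {R : ℝ} (hh : ∀ x ∈ E, 0 < h x)
    (hR : ∀ x ∈ E, h x ≤ R) (hxQ : ∀ x ∈ E, x ∈ Cube (a x) (h x)) :
    ∃ u ⊆ E, u.Countable ∧ u.PairwiseDisjoint (fun y => Cube (a y) (h y)) ∧
      ∃ a' : Euc n → Euc n, (∀ y ∈ E, Cube (a y) (h y) ⊆ Cube (a' y) (8 * √n * h y)) ∧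
        E ⊆ ⋃ y ∈ u, Cube (a' y) (8 * √n * h y) := by
  have hsqrt : 0 < √(n : ℝ) := Real.sqrt_pos.2 (Nat.cast_pos.2 hn)
  have hr (x : Euc n) (hx : x ∈ E) : 0 < h x * √n := mul_pos (hh x hx) hsqrt
  obtain ⟨u, huE, hdisj, hcover⟩ :=
    Vitali.exists_disjoint_subfamily_covering_enlargement_closedBall E id (fun x => h x * √n)
      (R * √n) (fun x hx => by gcongr; exact hR x hx) 4 (by norm_num)
  have hball (y : Euc n) : closedBall y (4 * (h y * √n)) ⊆
      Cube (WithLp.toLp 2 fun i => y i - 4 * (h y * √n)) (8 * √n * h y) := by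
    convert closedBall_subset_cube y (4 * (h y * √n)) using 2; ring
  have hQ (y : Euc n) (hy : y ∈ E) : Cube (a y) (h y) ⊆ closedBall y (h y * √n) :=
    cube_subset_closedBall (hh y hy).le (hxQ y hy)
  refine ⟨u, huE, hdisj.countable_of_nonempty_interior fun y hy =>
      ⟨y, ball_subset_interior_closedBall (mem_ball_self (hr y (huE hy)))⟩,
    fun y hy z hz hyz => (hdisj hy hz hyz).mono (hQ y (huE hy)) (hQ z (huE hz)),
    fun y => WithLp.toLp 2 fun i => y i - 4 * (h y * √n), fun y hy => ?_, fun x hx => ?_⟩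
  · exact ((hQ y hy).trans (closedBall_subset_closedBall (by linarith [hr y hy]))).trans
      (hball y)
  · obtain ⟨y, hy, hxy⟩ := hcover x hx
    exact mem_biUnion hy (hball y (hxy (mem_closedBall_self (hr x hx).le)))

lemma rpow_mul_withDensity_le_of_forall_mem_cube (hn : 0 < n) (hp : 1 ≤ p) (hq : 0 < q)
    (hpq : p ≤ q) (hqe : 1 / q = 1 / p - α / n) (hw : Measurable w) (hf : Measurable f)
    (hA : Apq p q w ≠ ⊤) {t : ℝ≥0∞} {R : ℝ} {E : Set (Euc n)}
    (hE : ∀ x ∈ E, ∃ (a : Euc n) (h : ℝ), 0 < h ∧ h < R ∧ x ∈ Cube a h ∧ t ≤ fracAvg α f a h) :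
    t ^ q * volume.withDensity (fun x => ENNReal.ofReal (w x) ^ q) E ≤
      (ENNReal.ofReal (8 * √n) ^ n) ^ (1 + q / dualExp p) * Apq p q w *
        (∫⁻ y, (ENNReal.ofReal (w y) * ENNReal.ofReal |f y|) ^ p) ^ (q / p) := by
  choose! a h hh hR hxQ hQt using hE
  obtain ⟨u, huE, hu, hdisj, a', hQQ', hcover⟩ :=
    exists_disjoint_subfamily_covering_enlargement_cube hn a h hh (fun x hx => (hR x hx).le) hxQ
  set ν := volume.withDensity (fun x => ENNReal.ofReal (w x) ^ q)
  set C := (ENNReal.ofReal (8 * √n) ^ n) ^ (1 + q / dualExp p)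
  set F := fun y => (ENNReal.ofReal (w y) * ENNReal.ofReal |f y|) ^ p
  calc t ^ q * ν E ≤ ∑' y : u, t ^ q * ν (Cube (a' y) (8 * √n * h y)) := by
        rw [ENNReal.tsum_mul_left]
        exact mul_le_mul_right ((measure_mono hcover).trans (measure_biUnion_le ν hu _)) _
    _ ≤ ∑' y : u, C * Apq p q w * (∫⁻ x in Cube (a y) (h y), F x) ^ (q / p) :=
        ENNReal.tsum_le_tsum fun y => by
          rw [withDensity_apply _ (measurableSet_cube _ _)]
          exact rpow_mul_lintegral_le_of_le_fracAvg hp hq hqe hw hf hA (hh y (huE y.2))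
            (by positivity) (hQQ' y (huE y.2)) (hQt y (huE y.2))
    _ ≤ C * Apq p q w * (∑' y : u, ∫⁻ x in Cube (a y) (h y), F x) ^ (q / p) := by
        rw [ENNReal.tsum_mul_left]
        exact mul_le_mul_right
          (ENNReal.tsum_rpow_le_rpow_tsum _ ((one_le_div (by linarith)).2 hpq)) _
    _ ≤ C * Apq p q w * (∫⁻ x, F x) ^ (q / p) := by
        rw [← lintegral_biUnion hu (fun y _ => measurableSet_cube _ _) hdisj]
        gcongr
        exact Measure.restrict_le_self

lemma rpow_mul_withDensity_setOf_lt_fracMax_le (hn : 0 < n) (hp : 1 ≤ p) (hq : 0 < q)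
    (hpq : p ≤ q) (hqe : 1 / q = 1 / p - α / n) (hw : Measurable w) (hf : Measurable f)
    (hA : Apq p q w ≠ ⊤) (t : ℝ≥0∞) :
    t ^ q * volume.withDensity (fun x => ENNReal.ofReal (w x) ^ q) {x | t < fracMax α f x} ≤
      (ENNReal.ofReal (8 * √n) ^ n) ^ (1 + q / dualExp p) * Apq p q w *
        (∫⁻ y, (ENNReal.ofReal (w y) * ENNReal.ofReal |f y|) ^ p) ^ (q / p) := by
  have hmono : Monotone fun k : ℕ =>
      {x | ∃ (a : Euc n) (h : ℝ), 0 < h ∧ h < k ∧ x ∈ Cube a h ∧ t < fracAvg α f a h} :=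
    fun k l hkl x ⟨a, h, hh, hk, hx, ht⟩ =>
      ⟨a, h, hh, hk.trans_le (Nat.cast_le.2 hkl), hx, ht⟩
  rw [setOf_lt_fracMax_eq_iUnion, hmono.measure_iUnion, ENNReal.mul_iSup]
  exact iSup_le fun k => rpow_mul_withDensity_le_of_forall_mem_cube hn hp hq hpq hqe hw hf hA
    fun x ⟨a, h, hh, hk, hx, ht⟩ => ⟨a, h, hh, hk, hx, ht.le⟩

end Covering

lemma pos_and_le_of_one_div_eq {α p q : ℝ} (hα : 0 ≤ α) (hp : 1 ≤ p) (hpn : α * p < n)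
    (hq : 1 / q = 1 / p - α / n) : 0 < q ∧ p ≤ q := by
  have hn : (0 : ℝ) < n := (mul_nonneg hα (by linarith)).trans_lt hpn
  have h1q : 0 < 1 / q := by
    rw [hq, sub_pos, div_lt_div_iff₀ hn (by linarith)]
    linarith
  have hq0 := one_div_pos.1 h1q
  exact ⟨hq0, le_of_one_div_le_one_div hq0 (by rw [hq]; linarith [div_nonneg hα hn.le])⟩

theorem fracMax_weak_type_bound_general
    (n : ℕ) (α p q : ℝ) (hα : 0 ≤ α)
    (hp : 1 ≤ p) (hpn : α * p < n) (hq : 1 / q = 1 / p - α / n) :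
    ∃ c : ℝ, 0 < c ∧ ∀ w f : Euc n → ℝ, Measurable w → (∀ x, 0 ≤ w x) → Measurable f →
      Apq p q w < ⊤ →
      weakLpE (fun x => w x ^ q) (fracMax α f) q ≤
        ENNReal.ofReal c * Apq p q w ^ (1 / q) * wLp w f p := by
  have hn : 0 < n := by exact_mod_cast (mul_nonneg hα (by linarith)).trans_lt hpn
  obtain ⟨hq0, hpq⟩ := pos_and_le_of_one_div_eq hα hp hpn hq
  set C := (ENNReal.ofReal (8 * √n) ^ n) ^ (1 + q / dualExp p)
  have hC : C ^ (1 / q) ≠ 0 ∧ C ^ (1 / q) ≠ ⊤ := by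
    have hb0 : 0 < ENNReal.ofReal (8 * √n) ^ n := ENNReal.pow_pos (ofReal_pos.2 (by positivity)) n
    have hb : ENNReal.ofReal (8 * √n) ^ n ≠ ⊤ := pow_ne_top ofReal_ne_top
    have hCtop : C ≠ ⊤ :=
      rpow_ne_top_of_nonneg (by linarith [div_nonneg hq0.le (dualExp_nonneg hp)]) hb
    exact ⟨(ENNReal.rpow_pos (ENNReal.rpow_pos hb0 hb) hCtop).ne',
      rpow_ne_top_of_nonneg (by positivity) hCtop⟩
  refine ⟨(C ^ (1 / q)).toReal, toReal_pos hC.1 hC.2, fun w f hw hw0 hf hA => ?_⟩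
  calc weakLpE (fun x => w x ^ q) (fracMax α f) q
      ≤ (C * Apq p q w * (∫⁻ y, (ENNReal.ofReal (w y) * ENNReal.ofReal |f y|) ^ p) ^ (q / p))
          ^ (1 / q) :=
        weakLpE_le_of_forall_rpow_mul_le hq0 fun t => by
          rw [wMeas_rpow_eq_withDensity hw0 hq0.le]
          exact rpow_mul_withDensity_setOf_lt_fracMax_le hn hp hq0 hpq hq hw hf hA.ne t
    _ = ENNReal.ofReal (C ^ (1 / q)).toReal * Apq p q w ^ (1 / q) * wLp w f p := by
        rw [ofReal_toReal hC.2, mul_rpow_of_nonneg _ _ (by positivity),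
          mul_rpow_of_nonneg _ _ (by positivity), wLp, ← rpow_mul _ (q / p),
          show q / p * (1 / q) = 1 / p by field_simp]

/-- Weak-type bound for the fractional maximal operator (equation (2.9)):
`‖M_α f‖_{L^{q,∞}(w^q)} ≤ c [w]_{A_{p,q}}^{1/q} ‖w f‖_{L^p}`. -/
theorem fracMax_weak_type_bound
    (n : ℕ) (hn : 0 < n) (α p q : ℝ) (hα : 0 ≤ α) (hαn : α < n)
    (hp : 1 ≤ p) (hpn : α * p < n) (hq : 1 / q = 1 / p - α / n) :
    ∃ c : ℝ, 0 < c ∧ ∀ w f : Euc n → ℝ, Measurable w → (∀ x, 0 ≤ w x) → Measurable f →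
      Apq p q w < ⊤ →
      weakLpE (fun x => w x ^ q) (fracMax α f) q ≤
        ENNReal.ofReal c * Apq p q w ^ (1 / q) * wLp w f p :=
  fracMax_weak_type_bound_general n α p q hα hp hpn hq
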